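/- arXiv:2601.21660 — 6 statements merged into one kernel-verified Lean document; each statement's English description precedes it below -/
import Mathlib

section
/- If y₀ ∈ (0,1) satisfies ln(2 - y₀/2) = (3/2)·y₀, then 1 + ln(2 - y₀/2) < 1.5897. -/
/-!
The map `y ↦ log (2 - y/2) - 3y/2` is strictly decreasing below `4`, and it is already negative at
`c = 0.393131` (certified by an eight-term Taylor lower bound for `exp (3c/2)`). Hence the root
satisfies `y₀ < c`, and `1 + log (2 - y₀/2) = 1 + 3y₀/2 < 1 + 3c/2 < 1.5897`.
-/

open Real

lemma lt_of_log_two_sub_half_eq {y c : ℝ} (hy : y < 4)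
    (hc : log (2 - c / 2) < 3 / 2 * c) (heq : log (2 - y / 2) = 3 / 2 * y) : y < c := by
  by_contra! hcy
  have hmono : log (2 - y / 2) ≤ log (2 - c / 2) := log_le_log (by linarith) (by linarith)
  linarith

lemma log_two_sub_half_lt_at_bound : log (2 - (0.393131 : ℝ) / 2) < 3 / 2 * 0.393131 := by
  rw [log_lt_iff_lt_exp (by norm_num)]
  refine lt_of_lt_of_le ?_ (sum_le_exp_of_nonneg (x := 3 / 2 * 0.393131) (by norm_num) 8)
  simp only [Finset.sum_range_succ, Finset.sum_range_zero]
  norm_num [Nat.factorial]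

theorem stmt_1 (y₀ : ℝ) (hy : y₀ ∈ Set.Ioo (0:ℝ) 1)
    (heq : Real.log (2 - y₀ / 2) = (3 / 2) * y₀) :
    1 + Real.log (2 - y₀ / 2) < 1.5897 := by
  have hlt : y₀ < 0.393131 :=
    lt_of_log_two_sub_half_eq (by linarith [hy.2]) log_two_sub_half_lt_at_bound heq
  rw [heq]
  linarith
end

section
/- The function h(y) = (1/2)·y + 6·(1-y)·(1 - exp(-(1/2)·y)) - ln(2 - 2y) has a unique root y₁ in the interval [0, 1/2), and this root satisfies y₁ > 0.17458. -/
/-!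
On `[0, 1/2)` the derivative of `h` is positive: `exp (-y/2) ≥ 1 - y/2` gives
`h' y ≥ 1/2 - 3y + 1/(1 - y) > 0`. So `h` has at most one root there, and a root exists in
`(0.17458, 0.4)` by the intermediate value theorem, since `h 0.17458 < 0 < h 0.4`.
-/

open Real Set

noncomputable def hFun (y : ℝ) : ℝ :=
  (1 / 2) * y + 6 * (1 - y) * (1 - exp (-(1 / 2) * y)) - log (2 - 2 * y)

lemma hasDerivAt_hFun {y : ℝ} (hy : y < 1) :
    HasDerivAt hFun (1 / 2 - 6 * (1 - exp (-(1 / 2) * y)) + 3 * (1 - y) * exp (-(1 / 2) * y)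
      + 1 / (1 - y)) y := by
  have hid := hasDerivAt_id' y
  have hlog := ((hid.const_mul 2).const_sub 2).log (by linarith)
  have := ((hid.const_mul (1 / 2)).add (((hid.const_sub 1).const_mul 6).mul
    ((hid.const_mul (-(1 / 2))).exp.const_sub 1))).sub hlog
  refine (this.congr_deriv ?_).congr_of_eventuallyEq (.of_forall fun _ => rfl)
  rw [show (2 : ℝ) - 2 * y = 2 * (1 - y) by ring]
  field_simp [show (1 - y) ≠ 0 by linarith]
  ring

lemma continuousOn_hFun : ContinuousOn hFun (Iio 1) :=
  fun _ hy => (hasDerivAt_hFun hy).continuousAt.continuousWithinAt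

lemma strictMonoOn_hFun : StrictMonoOn hFun (Ico 0 (1 / 2)) := by
  have hcont : ContinuousOn hFun (Ico 0 (1 / 2)) :=
    continuousOn_hFun.mono fun y hy => by simp only [mem_Ico, mem_Iio] at hy ⊢; linarith
  refine strictMonoOn_of_deriv_pos (convex_Ico _ _) hcont fun y hy => ?_
  rw [interior_Ico] at hy
  obtain ⟨hy0, hy1⟩ := hy
  rw [(hasDerivAt_hFun (by linarith)).deriv]
  have hexp : 1 - (1 / 2) * y ≤ exp (-(1 / 2) * y) := by
    linarith [add_one_le_exp (-(1 / 2) * y)]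
  have hinv : 1 ≤ 1 / (1 - y) := by rw [le_div_iff₀ (by linarith)]; linarith
  nlinarith [exp_pos (-(1 / 2) * y)]

-- `hFun 0.17458 ≈ -2e-5`, so this bound and `log_1_65084_gt` must be accurate to about `1e-5`.
lemma exp_neg_0_08729_ge : (0.91641128 : ℝ) ≤ exp (-0.08729) := by
  have h := abs_le.mp (exp_bound (x := -0.08729) (by norm_num [abs_of_neg]) (n := 5) (by norm_num))
  norm_num [abs_of_neg, Finset.sum_range_succ, Nat.factorial] at h
  linarith [h.1]

lemma exp_neg_0_2_le : exp (-0.2) ≤ (0.83 : ℝ) := by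
  have h := abs_le.mp (exp_bound (x := -0.2) (by norm_num [abs_of_neg]) (n := 3) (by norm_num))
  norm_num [abs_of_neg, Finset.sum_range_succ, Nat.factorial] at h
  linarith [h.2]

lemma exp_half_lt : exp (1 / 2) < (1.6487213 : ℝ) := by
  have hsq : exp (1 / 2) * exp (1 / 2) = exp 1 := by rw [← exp_add]; norm_num
  nlinarith [exp_one_lt_d9, exp_pos (1 / 2)]

lemma log_1_65084_gt : (0.50127 : ℝ) < log 1.65084 := by
  rw [lt_log_iff_exp_lt (by norm_num), show (0.50127 : ℝ) = 1 / 2 + 0.00127 by norm_num, exp_add]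
  have hsmall : exp (0.00127 : ℝ) ≤ 1 / (1 - 0.00127) :=
    exp_bound_div_one_sub_of_interval (by norm_num) (by norm_num)
  nlinarith [exp_half_lt, exp_pos (1 / 2), exp_pos (0.00127 : ℝ)]

lemma hFun_0_17458_neg : hFun 0.17458 < 0 := by
  have h := exp_neg_0_08729_ge
  have h' := log_1_65084_gt
  norm_num [hFun] at h h' ⊢
  linarith

lemma hFun_0_4_pos : 0 < hFun 0.4 := by
  have h := exp_neg_0_2_le
  have h' : log 1.2 ≤ (1.2 : ℝ) - 1 := log_le_sub_one_of_pos (by norm_num)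
  norm_num [hFun] at h h' ⊢
  linarith

theorem stmt_4 :
    ∃ y₁ : ℝ, y₁ ∈ Set.Ico (0:ℝ) (1 / 2) ∧
      (1 / 2) * y₁ + 6 * (1 - y₁) * (1 - Real.exp (-(1 / 2) * y₁))
        - Real.log (2 - 2 * y₁) = 0 ∧
      y₁ > 0.17458 ∧
      ∀ y ∈ Set.Ico (0:ℝ) (1 / 2),
        (1 / 2) * y + 6 * (1 - y) * (1 - Real.exp (-(1 / 2) * y))
          - Real.log (2 - 2 * y) = 0 → y = y₁ := by
  have hcont : ContinuousOn hFun (Icc 0.17458 0.4) :=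
    continuousOn_hFun.mono fun y hy => by simp only [mem_Icc, mem_Iio] at hy ⊢; linarith
  obtain ⟨y₁, ⟨hlo, hhi⟩, hroot⟩ := intermediate_value_Ioo (by norm_num) hcont
    ⟨hFun_0_17458_neg, hFun_0_4_pos⟩
  have hmem : y₁ ∈ Ico (0 : ℝ) (1 / 2) := ⟨by linarith, by linarith⟩
  exact ⟨y₁, hmem, hroot, hlo,
    fun y hy hy0 => strictMonoOn_hFun.injOn hy hmem (hy0.trans hroot.symm)⟩
end

section
/- If y₁ ∈ (0, 1/2) satisfies (1/2)·y₁ + 6·(1-y₁)·(1 - exp(-(1/2)·y₁)) = ln(2 - 2y₁), then 1 + y₁ + ln(2 - 2y₁) < 1.6759. -/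
/-!
For `y ≤ 0.17455` a third-order Taylor bound on `exp` puts the left-hand side of the equation
below `0.50125`, while its right-hand side is at least `log 1.6509 > 0.50125`; hence
`y₁ > 0.17455`. As `y + log (2 - 2y)` is decreasing, the target quantity is then below
`1.17455 + log 1.6509 < 1.6759`.
-/

open Real

lemma one_sub_exp_neg_le {t : ℝ} (ht : |t| ≤ 1) :
    1 - exp (-t) ≤ t - t ^ 2 / 2 + t ^ 3 / 6 + 5 * t ^ 4 / 96 := by
  have h := Real.exp_bound (x := -t) (by rwa [abs_neg]) (n := 4) (by norm_num)
  simp only [Finset.sum_range_succ, Finset.sum_range_zero, Nat.factorial, abs_neg,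
    (by decide : Even 4).pow_abs] at h
  norm_num at h
  linarith [(abs_le.mp h).1]

lemma half_mul_add_six_mul_one_sub_exp_le {y : ℝ} (hy0 : 0 ≤ y) (hy : y ≤ 0.17455) :
    1 / 2 * y + 6 * (1 - y) * (1 - exp (-(1 / 2) * y)) ≤ 0.50125 := by
  have hexp := one_sub_exp_neg_le (t := 1 / 2 * y) (by rw [abs_le]; constructor <;> linarith)
  rw [← neg_mul] at hexp
  have h1y : 0 ≤ 1 - y := by linarith
  nlinarith [mul_le_mul_of_nonneg_left hexp h1y, mul_nonneg hy0 (sub_nonneg.2 hy),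
    mul_nonneg (mul_nonneg hy0 hy0) (sub_nonneg.2 hy)]

lemma log_1_6509_mem_Ioo : log 1.6509 ∈ Set.Ioo 0.50125 0.501349 := by
  constructor
  · rw [lt_log_iff_exp_lt (by norm_num)]
    refine (Real.exp_bound' (by norm_num) (by norm_num) (n := 8) (by norm_num)).trans_lt ?_
    norm_num [Finset.sum_range_succ, Nat.factorial]
  · rw [log_lt_iff_lt_exp (by norm_num)]
    refine lt_of_lt_of_le ?_ (Real.sum_le_exp_of_nonneg (by norm_num) 8)
    norm_num [Finset.sum_range_succ, Nat.factorial]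

lemma lt_of_half_mul_add_six_mul_one_sub_exp_eq_log {y : ℝ} (hy0 : 0 ≤ y)
    (heq : 1 / 2 * y + 6 * (1 - y) * (1 - exp (-(1 / 2) * y)) = log (2 - 2 * y)) :
    0.17455 < y := by
  by_contra! hy
  have hlhs := half_mul_add_six_mul_one_sub_exp_le hy0 hy
  have hrhs : log 1.6509 ≤ log (2 - 2 * y) := log_le_log (by norm_num) (by linarith)
  linarith [log_1_6509_mem_Ioo.1]

lemma add_log_mul_one_sub_le {a y c : ℝ} (hc : 0 < c) (ha : 0 ≤ a) (hay : a ≤ y) (hy : y < 1) :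
    y + log (c * (1 - y)) ≤ a + log (c * (1 - a)) := by
  have h1a : 0 < 1 - a := by linarith
  have hlog := log_le_sub_one_of_pos (x := (1 - y) / (1 - a)) (by apply div_pos <;> linarith)
  rw [log_div (by linarith) h1a.ne', div_sub_one h1a.ne', le_div_iff₀ h1a] at hlog
  rw [log_mul hc.ne' (by linarith), log_mul hc.ne' h1a.ne']
  nlinarith

theorem stmt_5 (y₁ : ℝ) (hy : y₁ ∈ Set.Ioo (0:ℝ) (1 / 2))
    (heq : (1 / 2) * y₁ + 6 * (1 - y₁) * (1 - Real.exp (-(1 / 2) * y₁))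
      = Real.log (2 - 2 * y₁)) :
    1 + y₁ + Real.log (2 - 2 * y₁) < 1.6759 := by
  obtain ⟨hy0, hy2⟩ := hy
  have hroot := lt_of_half_mul_add_six_mul_one_sub_exp_eq_log hy0.le heq
  calc 1 + y₁ + log (2 - 2 * y₁) = 1 + (y₁ + log (2 * (1 - y₁))) := by ring_nf
    _ ≤ 1 + (0.17455 + log (2 * (1 - 0.17455))) := by
      gcongr 1 + ?_
      exact add_log_mul_one_sub_le two_pos (by norm_num) hroot.le (by linarith)
    _ < 1.6759 := by
      rw [show (2 : ℝ) * (1 - 0.17455) = 1.6509 by norm_num]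
      linarith [log_1_6509_mem_Ioo.2]
end

section
/- For all y ∈ [0,1] and ε ∈ [0,1), the unique root y₀(ε) ∈ [0,1] of the equation ln((1−ε)·(2 − y/2)) = (3/2)·(1−ε)·y exists whenever (1−ε)·(3/2) > ln(2(1−ε)) and ln((3/2)(1−ε)) ≥ 0; in particular, for ε = 0.000335 the root satisfies y₀(ε) > 0.39305. -/
/-! The gap `logGap ε y` between the two sides of the equation is continuous and strictly
decreasing in `y` (a decreasing logarithm minus an increasing linear term). At the ends,
`logGap ε 0 = log(2(1-ε)) ≥ log((3/2)(1-ε)) ≥ 0` and `logGap ε 1 ≤ -1` because `log x ≤ x - 1`,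
so the intermediate value theorem gives a root in `[0, 1]`, unique by monotonicity. For
`ε = 0.000335` a Taylor bound on `exp` shows `logGap ε 0.39305 > 0`, which places the root to
the right of `0.39305`. -/

open Real Set

theorem StrictAntiOn.existsUnique_eq_zero_Icc {f : ℝ → ℝ} {a b : ℝ} (hab : a ≤ b)
    (hcont : ContinuousOn f (Icc a b)) (hanti : StrictAntiOn f (Icc a b))
    (ha : 0 ≤ f a) (hb : f b ≤ 0) : ∃! x, x ∈ Icc a b ∧ f x = 0 := by
  obtain ⟨x, hx, hfx⟩ := intermediate_value_Icc' hab hcont ⟨hb, ha⟩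
  exact ⟨x, ⟨hx, hfx⟩, fun z ⟨hz, hfz⟩ => hanti.injOn hz hx (hfz.trans hfx.symm)⟩

noncomputable def logGap (ε y : ℝ) : ℝ :=
  log ((1 - ε) * (2 - y / 2)) - 3 / 2 * (1 - ε) * y

section

variable {ε : ℝ}

theorem logGap_eq_zero_iff {y : ℝ} :
    logGap ε y = 0 ↔ log ((1 - ε) * (2 - y / 2)) = 3 / 2 * (1 - ε) * y :=
  sub_eq_zero

theorem logGap_zero : logGap ε 0 = log (2 * (1 - ε)) := by
  simp only [logGap]
  ring_nf

theorem logGap_one : logGap ε 1 = log (3 / 2 * (1 - ε)) - 3 / 2 * (1 - ε) := by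
  simp only [logGap]
  ring_nf

theorem strictAntiOn_logGap (hε : ε < 1) : StrictAntiOn (logGap ε) (Iio 4) := by
  intro y₁ _ y₂ (hy₂ : y₂ < 4) hlt
  have hε' : 0 < 1 - ε := sub_pos.mpr hε
  have hlog : log ((1 - ε) * (2 - y₂ / 2)) < log ((1 - ε) * (2 - y₁ / 2)) :=
    log_lt_log (by nlinarith) (by nlinarith)
  have hlin : 3 / 2 * (1 - ε) * y₁ < 3 / 2 * (1 - ε) * y₂ := by nlinarith
  simp only [logGap]
  linarith

theorem continuousOn_logGap (hε : ε < 1) : ContinuousOn (logGap ε) (Iio 4) := by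
  have hε' : 0 < 1 - ε := sub_pos.mpr hε
  refine ContinuousOn.sub (ContinuousOn.log (by fun_prop) fun y (hy : y < 4) => ?_) (by fun_prop)
  nlinarith

end

theorem Icc_zero_one_subset_Iio_four : Icc (0 : ℝ) 1 ⊆ Iio 4 :=
  fun _ hy => lt_of_le_of_lt hy.2 (by norm_num)

theorem logGap_pos_at_039305 : 0 < logGap 0.000335 0.39305 := by
  have harg : (1 - 0.000335) * (2 - (0.39305 : ℝ) / 2) = 14422966687 / 8000000000 := by norm_num
  have hlin : (3 / 2 : ℝ) * (1 - 0.000335) * 0.39305 = 4715019939 / 8000000000 := by norm_num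
  rw [logGap, harg, hlin, sub_pos, lt_log_iff_exp_lt (by norm_num)]
  refine lt_of_le_of_lt (exp_bound' (by norm_num) (by norm_num) (n := 13) (by norm_num)) ?_
  simp only [Finset.sum_range_succ, Finset.sum_range_zero, Nat.factorial]
  norm_num

theorem stmt_11 :
    (∀ ε : ℝ, ε ∈ Set.Ico (0:ℝ) 1 →
      (1 - ε) * (3 / 2) > Real.log (2 * (1 - ε)) →
      Real.log ((3 / 2) * (1 - ε)) ≥ 0 →
      ∃! y : ℝ, y ∈ Set.Icc (0:ℝ) 1 ∧
        Real.log ((1 - ε) * (2 - y / 2)) = (3 / 2) * (1 - ε) * y) ∧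
    (∀ y : ℝ, y ∈ Set.Icc (0:ℝ) 1 →
      Real.log ((1 - 0.000335) * (2 - y / 2)) = (3 / 2) * (1 - 0.000335) * y →
      y > 0.39305) := by
  refine ⟨fun ε ⟨_, hε⟩ _ hlog => ?_, fun y hy hroot => ?_⟩
  · have hε' : 0 < 1 - ε := sub_pos.mpr hε
    have h0 : 0 ≤ logGap ε 0 := by
      rw [logGap_zero]
      exact hlog.trans (log_le_log (by positivity) (by linarith))
    have h1 : logGap ε 1 ≤ 0 := by
      have := log_le_sub_one_of_pos (show 0 < 3 / 2 * (1 - ε) by positivity)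
      rw [logGap_one]
      linarith
    simpa only [logGap_eq_zero_iff] using StrictAntiOn.existsUnique_eq_zero_Icc zero_le_one
      ((continuousOn_logGap hε).mono Icc_zero_one_subset_Iio_four)
      ((strictAntiOn_logGap hε).mono Icc_zero_one_subset_Iio_four) h0 h1
  · have hε : (0.000335 : ℝ) < 1 := by norm_num
    refine ((strictAntiOn_logGap hε).lt_iff_gt (Icc_zero_one_subset_Iio_four hy) (by norm_num)).mp ?_
    rw [logGap_eq_zero_iff.mpr hroot]
    exact logGap_pos_at_039305
end

section
/- With ε = 0.000335 and y₀(ε) the unique root in (0,1) of ln((1−ε)(2 − y/2)) = (3/2)(1−ε)·y, it holds that 2.5 + ln((1−ε)·(2 − y₀(ε)/2)) < 3.0894. -/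
/-!
The map `y ↦ (3/2)(1-ε) y - log((1-ε)(2 - y/2))` is strictly increasing and vanishes at `y₀`.
A Taylor lower bound for `exp` shows it is already positive at `y = 0.39306`, so `y₀ < 0.39306`
and `log((1-ε)(2 - y₀/2)) = (3/2)(1-ε) y₀ < 0.5894`.
-/

open Finset Nat

lemma Real.log_lt_of_lt_sum_range_pow_div_factorial {x c : ℝ} (hx : 0 < x) (hc : 0 ≤ c) (n : ℕ)
    (h : x < ∑ i ∈ range n, c ^ i / i !) : Real.log x < c :=
  (Real.log_lt_iff_lt_exp hx).mpr (h.trans_le (Real.sum_le_exp_of_nonneg hc n))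

lemma strictMonoOn_mul_sub_log_mul_two_sub {k c : ℝ} (hk : 0 < k) (hc : 0 < c) :
    StrictMonoOn (fun y => k * y - Real.log (c * (2 - y / 2))) (Set.Iio 4) := by
  intro a _ b hb hab
  have hlog : Real.log (c * (2 - b / 2)) ≤ Real.log (c * (2 - a / 2)) := by
    have hb4 : b < 4 := hb
    apply Real.log_le_log (by nlinarith)
    gcongr
  show k * a - _ < k * b - _
  linarith [mul_lt_mul_of_pos_left hab hk]

theorem stmt_12 (ε y₀ : ℝ) (hε : ε = 0.000335) (hy : y₀ ∈ Set.Ioo (0:ℝ) 1)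
    (heq : Real.log ((1 - ε) * (2 - y₀ / 2)) = (3 / 2) * (1 - ε) * y₀) :
    2.5 + Real.log ((1 - ε) * (2 - y₀ / 2)) < 3.0894 := by
  subst hε
  have hlog_bound : Real.log ((1 - 0.000335) * (2 - 0.39306 / 2)) < 0.58938 :=
    Real.log_lt_of_lt_sum_range_pow_div_factorial (by norm_num) (by norm_num) 8
      (by norm_num [Finset.sum_range_succ, Nat.factorial])
  have hy₀ : y₀ < 0.39306 := by
    refine ((strictMonoOn_mul_sub_log_mul_two_sub (k := (3 / 2) * (1 - 0.000335))
      (by norm_num) (by norm_num : (0 : ℝ) < 1 - 0.000335)).lt_iff_lt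
      (by simp only [Set.mem_Iio]; linarith [hy.2]) (by norm_num)).mp ?_
    linarith
  rw [heq]
  linarith
end

section
/- Let y₁ ∈ (0,1/2) be the unique root of (1/2)y + 6(1−y)(1 − e^{−y/2}) = ln(2−2y), and set y₂ = 4(1−y₁)(1 − e^{−y₁/2}). Then for all pairs (a, b) with a, b ≥ 0 and a + b ≤ 1, min{(3/2)(a+b), (3/2)a + ln(2 − 2a − b/2), a + ln(2 − 2a)} ≤ y₁ + ln(2 − 2y₁), provided 2 − 2a − b/2 > 0 and 2 − 2a > 0. -/
/-!
Put `c = (2 - 2y₁) exp (-y₁/2)` and `M = y₁ + log (2 - 2y₁)`. The defining equation of `y₁`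
forces `y₁ ≤ 3/10`, hence `c ≥ 1`, and it can be rewritten as `M / 3 = y₁ / 2 + (2 - 2y₁) - c`.

If `a ≥ y₁`, the third bound wins, because `x ↦ x + log (2 - 2x)` is antitone on `[0, 1)`.
If `a < y₁` and the first bound exceeds `M`, then `b / 2 > M / 3 - a / 2`, which by the rewritten
equation says `2 - 2a - b/2 < c + t` with `t = (3/2)(y₁ - a)`. Since `c ≥ 1`,
`log (c + t) ≤ log c + t`, and `(3/2) a + log c + t = M`.
-/

open Real

lemma Real.log_le_log_add_sub_div {u v : ℝ} (hu : 0 < u) (hv : 0 < v) :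
    log u ≤ log v + (u - v) / v := by
  have h := log_le_sub_one_of_pos (div_pos hu hv)
  rw [log_div hu.ne' hv.ne', div_sub_one hv.ne'] at h
  linarith

lemma Real.log_add_le_log_add {c t : ℝ} (hc : 1 ≤ c) (ht : 0 ≤ t) :
    log (c + t) ≤ log c + t := by
  have hc0 : 0 < c := by linarith
  calc log (c + t) ≤ log c + (c + t - c) / c := log_le_log_add_sub_div (by linarith) hc0
    _ ≤ log c + t := by
      rw [add_sub_cancel_left]
      gcongr
      exact div_le_self ht hc

lemma antitoneOn_add_log_two_sub_two_mul :
    AntitoneOn (fun x : ℝ => x + log (2 - 2 * x)) (Set.Ico 0 1) := by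
  rintro y ⟨hy0, -⟩ x ⟨-, hx1⟩ hyx
  have hv : 0 < 2 - 2 * y := by linarith
  have h := log_le_log_add_sub_div (u := 2 - 2 * x) (by linarith) hv
  have hdiv : (2 - 2 * x - (2 - 2 * y)) / (2 - 2 * y) ≤ y - x := by
    rw [div_le_iff₀ hv]
    nlinarith
  dsimp only
  linarith

lemma le_three_tenths_of_eq_log {y : ℝ} (hy1 : y < 1)
    (heq : (1 / 2) * y + 6 * (1 - y) * (1 - exp (-y / 2)) = log (2 - 2 * y)) :
    y ≤ 3 / 10 := by
  by_contra! hy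
  have hlog : log (2 - 2 * y) ≤ 1 - 2 * y := by
    have := log_le_sub_one_of_pos (show 0 < 2 - 2 * y by linarith)
    linarith
  have hexp : (1 + y / 2) * exp (-y / 2) ≤ 1 := by
    calc (1 + y / 2) * exp (-y / 2) ≤ exp (y / 2) * exp (-y / 2) := by
          gcongr
          linarith [add_one_le_exp (y / 2)]
      _ = 1 := by rw [← exp_add, show y / 2 + -y / 2 = 0 by ring, exp_zero]
  nlinarith [exp_pos (-y / 2)]

lemma one_le_two_sub_two_mul_mul_exp {y : ℝ} (hy : y ≤ 3 / 10) :
    1 ≤ (2 - 2 * y) * exp (-y / 2) := by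
  have hE : 1 - y / 2 ≤ exp (-y / 2) := by linarith [add_one_le_exp (-y / 2)]
  nlinarith [mul_le_mul_of_nonneg_left hE (show 0 ≤ 2 - 2 * y by linarith)]

lemma three_halves_mul_add_log_le {y a b : ℝ} (hy : y < 1)
    (hc : 1 ≤ (2 - 2 * y) * exp (-y / 2))
    (heq : (1 / 2) * y + 6 * (1 - y) * (1 - exp (-y / 2)) = log (2 - 2 * y))
    (hay : a ≤ y) (hpos : 0 < 2 - 2 * a - b / 2)
    (hab : y + log (2 - 2 * y) < (3 / 2) * (a + b)) :
    (3 / 2) * a + log (2 - 2 * a - b / 2) ≤ y + log (2 - 2 * y) := by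
  set c := (2 - 2 * y) * exp (-y / 2) with hc_def
  have hlogc : log c = log (2 - 2 * y) - y / 2 := by
    rw [hc_def, log_mul (by linarith) (exp_pos _).ne', log_exp]
    ring
  have harg : 2 - 2 * a - b / 2 ≤ c + (3 / 2) * (y - a) := by
    rw [← heq] at hab
    linarith
  calc (3 / 2) * a + log (2 - 2 * a - b / 2)
      ≤ (3 / 2) * a + log (c + (3 / 2) * (y - a)) := by gcongr
    _ ≤ (3 / 2) * a + (log c + (3 / 2) * (y - a)) := by
      gcongr
      exact log_add_le_log_add hc (by linarith)
    _ = y + log (2 - 2 * y) := by rw [hlogc]; ring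

theorem stmt_15_general (y₁ : ℝ) (hy : y₁ ∈ Set.Ioo (0:ℝ) (1 / 2))
    (heq : (1 / 2) * y₁ + 6 * (1 - y₁) * (1 - Real.exp (-y₁ / 2))
      = Real.log (2 - 2 * y₁)) :
    ∀ a b : ℝ, 0 ≤ a → 0 ≤ b → a + b ≤ 1 →
      0 < 2 - 2 * a - b / 2 → 0 < 2 - 2 * a →
      min (min ((3 / 2) * (a + b)) ((3 / 2) * a + Real.log (2 - 2 * a - b / 2)))
          (a + Real.log (2 - 2 * a))
        ≤ y₁ + Real.log (2 - 2 * y₁) := by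
  obtain ⟨hy0, hy12⟩ := hy
  have hy1 : y₁ < 1 := by linarith
  have hc := one_le_two_sub_two_mul_mul_exp (le_three_tenths_of_eq_log hy1 heq)
  intro a b ha _ _ hpos ha1
  rcases le_or_gt y₁ a with hya | hay
  · refine (min_le_right _ _).trans ?_
    exact antitoneOn_add_log_two_sub_two_mul ⟨hy0.le, hy1⟩ ⟨ha, by linarith⟩ hya
  rcases le_or_gt ((3 / 2) * (a + b)) (y₁ + log (2 - 2 * y₁)) with hab | hab
  · exact (min_le_left _ _).trans ((min_le_left _ _).trans hab)
  · refine (min_le_left _ _).trans ((min_le_right _ _).trans ?_)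
    exact three_halves_mul_add_log_le hy1 hc heq hay.le hpos hab

theorem stmt_15 (y₁ : ℝ) (hy : y₁ ∈ Set.Ioo (0:ℝ) (1 / 2))
    (heq : (1 / 2) * y₁ + 6 * (1 - y₁) * (1 - Real.exp (-y₁ / 2))
      = Real.log (2 - 2 * y₁))
    (huniq : ∀ y ∈ Set.Ioo (0:ℝ) (1 / 2),
      (1 / 2) * y + 6 * (1 - y) * (1 - Real.exp (-y / 2)) = Real.log (2 - 2 * y)
        → y = y₁)
    (y₂ : ℝ) (hdef : y₂ = 4 * (1 - y₁) * (1 - Real.exp (-y₁ / 2))) :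
    ∀ a b : ℝ, 0 ≤ a → 0 ≤ b → a + b ≤ 1 →
      0 < 2 - 2 * a - b / 2 → 0 < 2 - 2 * a →
      min (min ((3 / 2) * (a + b)) ((3 / 2) * a + Real.log (2 - 2 * a - b / 2)))
          (a + Real.log (2 - 2 * a))
        ≤ y₁ + Real.log (2 - 2 * y₁) :=
  stmt_15_general y₁ hy heq
end
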